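/- Let C_H be a GH code of length n = q^h·s over 𝔽_q, where s ≠ 1 and s is not a multiple of q. Then ker(C_H) ≤ h. -/

import Mathlib

open Finset

/-- `H` is a generalized Hadamard matrix with parameter `lam`: for every pair of
distinct rows, the multiset of coordinatewise differences contains every element
of `F` exactly `lam` times. -/
def IsGH {F : Type*} [Fintype F] [DecidableEq F] [Sub F]
    {ι : Type*} [Fintype ι] (lam : ℕ) (H : Matrix ι ι F) : Prop :=
  ∀ i j : ι, i ≠ j → ∀ a : F,
    (Finset.univ.filter (fun s => H i s - H j s = a)).card = lam

/-- A matrix is normalized if its first row and first column are all zeros. -/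
def Normalized {F : Type*} [Zero F] {n : ℕ} (H : Matrix (Fin n) (Fin n) F) : Prop :=
  ∀ i s : Fin n, (i.val = 0 ∨ s.val = 0) → H i s = 0

/-- The code `F_H` whose codewords are the rows of `H`. -/
def rowSet {F ι : Type*} (H : Matrix ι ι F) : Set (ι → F) :=
  Set.range (fun i => H i)

/-- The GH code `C_H = ⋃_{α ∈ F} (F_H + α·𝟏)`. -/
def ghCode {F ι : Type*} [Add F] (H : Matrix ι ι F) : Set (ι → F) :=
  {v | ∃ (α : F) (i : ι), v = fun s => H i s + α}

/-- The rank of a code: the dimension of its linear span. -/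
noncomputable def rankC {F ι : Type*} [Field F] (C : Set (ι → F)) : ℕ :=
  Module.finrank F (Submodule.span F C)

/-- The kernel `K(C) = {x : αx + C = C for all α}` of a code. -/
def kerSet {F ι : Type*} [Mul F] [Add F] (C : Set (ι → F)) : Set (ι → F) :=
  {x | ∀ α : F, (fun c => (fun i => α * x i) + c) '' C = C}

/-- The dimension of the kernel of a code. -/
noncomputable def kerDim {F ι : Type*} [Field F] (C : Set (ι → F)) : ℕ :=
  Module.finrank F (Submodule.span F (kerSet C))

/-- The `p`-kernel `K_p(C) = {x : x + C = C}` of a code. -/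
def pKerSet {F ι : Type*} [Add F] (C : Set (ι → F)) : Set (ι → F) :=
  {x | (fun c => x + c) '' C = C}

/-- The Euclidean orthogonal code `C^⊥`. -/
def dualSet {F ι : Type*} [CommRing F] [Fintype ι] (C : Set (ι → F)) : Set (ι → F) :=
  {v | ∀ w ∈ C, ∑ i, v i * w i = 0}

/-- Two matrices are translation equivalent if the rows of one are obtained from the
rows of the other by adding a fixed vector. -/
def TransEquiv {F ι : Type*} [Add F] (B B' : Matrix ι ι F) : Prop :=
  ∃ v : ι → F, rowSet B' = (fun b => v + b) '' rowSet B

/-- The Kronecker sum `H₁ ⊕ H₂`. -/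
def kroneckerSum {F ι κ : Type*} [Add F] (H₁ : Matrix ι ι F) (H₂ : Matrix κ κ F) :
    Matrix (ι × κ) (ι × κ) F :=
  fun p r => H₁ p.1 r.1 + H₂ p.2 r.2

/-- The Kronecker sum `H₁ ⊕ [B₁, …, Bₙ]`, whose `(i,j)` block is `h_{ij} + B_i`. -/
def kroneckerSumFam {F ι κ : Type*} [Add F] (H₁ : Matrix ι ι F) (B : ι → Matrix κ κ F) :
    Matrix (ι × κ) (ι × κ) F :=
  fun p r => H₁ p.1 r.1 + B p.1 p.2 r.2

/-- The multiplicative-table matrix `S_q` of a field. -/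
def mulTable (F : Type*) [Mul F] : Matrix F F F := fun i j => i * j

/-- A code is `K`-additive, for a subfield `K`, if it is a linear space over `K`. -/
def IsAdditiveOver {F ι : Type*} [Field F] (K : Subfield F) (C : Set (ι → F)) : Prop :=
  (0 : ι → F) ∈ C ∧ (∀ x ∈ C, ∀ y ∈ C, x + y ∈ C) ∧
    ∀ (a : K), ∀ x ∈ C, (fun i => (a : F) * x i) ∈ C

/-!
Let `K` be the kernel of `C_H` and `G ≤ K` the subspace of kernel vectors vanishing at the first
coordinate. Since `𝟏 ∈ K`, `ker(C_H) ≤ dim G + 1`, so it suffices to show `q ^ dim G = |G| < q ^ h`.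
Each vector of `G` lies in `C_H` and vanishes at the first coordinate, hence is a row of `H`; so
every nonzero `x ∈ G` has exactly `λ` zero coordinates. If all rows of `H` lie in `K`, then `G` is
the set of rows and `q ^ dim G = n = q ^ h s`, which is impossible since `s ≠ 1` and `q ∤ s`.
Otherwise pick a row `y ∉ K`: for `x ∈ G`, `x + y` is again a nonzero row, with `λ` zeros.
Count zeros over `G` coordinatewise: a coordinate on which `G` is not identically zero carries the
same number of zeros of `x` and of `x + y` (the coordinate map `G → 𝔽_q` is onto, so its fibres
have equal size), and any other coordinate carries `|G|` or `0` zeros of `x + y`. Hence `|G|`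
divides `n - λ = (q - 1) λ`, and `q ^ (dim G + 1) ∣ (q - 1) q ^ h s` forces `dim G < h`, as
`q ∤ s` and `q` is coprime to `q - 1`.
-/

section ZeroCount

variable {F ι : Type*} [Field F] [DecidableEq F] (G : Submodule F (ι → F)) [Fintype G]

lemma card_filter_apply_eq_of_exists_ne {t : ι} (ht : ∃ x ∈ G, x t ≠ 0) (c : F) :
    #{x : G | (x : ι → F) t = c} = #{x : G | (x : ι → F) t = 0} := by
  obtain ⟨x, hxG, hxt⟩ := ht
  let f : G →+ F := (LinearMap.proj t ∘ₗ G.subtype).toAddMonoidHom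
  refine AddMonoidHom.card_fiber_eq_of_mem_range f
    ⟨⟨(c / x t) • x, G.smul_mem _ hxG⟩, ?_⟩ ⟨0, map_zero f⟩
  simp [f, hxt]

lemma card_filter_apply_eq_zero_eq_add (y : ι → F) (t : ι) :
    #{x : G | (x : ι → F) t = 0} = #{x : G | (x : ι → F) t + y t = 0} +
      if (∀ x : G, (x : ι → F) t = 0) ∧ y t ≠ 0 then Fintype.card G else 0 := by
  by_cases ht : ∀ x : G, (x : ι → F) t = 0
  · by_cases hy : y t = 0 <;> simp [ht, hy]
  · obtain ⟨⟨x, hxG⟩, hxt⟩ := not_forall.1 ht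
    rw [if_neg fun h => ht h.1, add_zero,
      ← card_filter_apply_eq_of_exists_ne G ⟨x, hxG, hxt⟩ (-y t)]
    simp only [eq_neg_iff_add_eq_zero]

variable [Fintype ι]

lemma sum_card_zeros_eq_add (y : ι → F) :
    ∑ x : G, #{t | (x : ι → F) t = 0} = ∑ x : G, #{t | (x : ι → F) t + y t = 0} +
      Fintype.card G * #{t | (∀ x : G, (x : ι → F) t = 0) ∧ y t ≠ 0} := by
  have swap : ∀ P : G → ι → Prop, [DecidableRel P] →
      ∑ x : G, #{t | P x t} = ∑ t : ι, #{x : G | P x t} := by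
    intro P _
    simp only [card_filter]
    exact sum_comm
  rw [swap, swap, sum_congr rfl fun t _ => card_filter_apply_eq_zero_eq_add G y t,
    sum_add_distrib, ← sum_filter, sum_const, smul_eq_mul, mul_comm]

theorem card_dvd_of_card_zeros (y : ι → F) {lam : ℕ}
    (hG : ∀ x ∈ G, x ≠ 0 → #{t | x t = 0} = lam)
    (hGy : ∀ x ∈ G, #{t | x t + y t = 0} = lam) :
    Fintype.card G ∣ Fintype.card ι - lam := by
  have hsum := sum_card_zeros_eq_add G y
  rw [← add_sum_erase _ _ (mem_univ 0), sum_congr rfl fun (x : G) _ => hGy x x.2,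
    sum_congr rfl fun (x : G) hx => hG x x.2 (fun h => ne_of_mem_erase hx (Subtype.ext h))] at hsum
  obtain ⟨b, hb⟩ : ∃ b, Fintype.card G = b + 1 := Nat.exists_eq_add_one.2 Fintype.card_pos
  simp only [ZeroMemClass.coe_zero, Pi.zero_apply, filter_true, card_univ, sum_const,
    card_erase_of_mem (mem_univ _), smul_eq_mul, hb, add_tsub_cancel_right, add_one_mul b lam]
    at hsum
  exact ⟨#{t | (∀ x : G, (x : ι → F) t = 0) ∧ y t ≠ 0}, by rw [hb]; omega⟩

end ZeroCount

section Kernel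

variable {F ι : Type*} [Field F]

def kerSubmodule (C : Set (ι → F)) : Submodule F (ι → F) where
  carrier := kerSet C
  zero_mem' α := by
    have h : (fun c => (fun i : ι => α * (0 : ι → F) i) + c) = id := by
      funext c t; simp
    rw [h, Set.image_id]
  add_mem' {x y} hx hy α := by
    have h : (fun c => (fun i => α * (x + y) i) + c)
        = (fun c => (fun i => α * x i) + c) ∘ (fun c => (fun i => α * y i) + c) := by
      funext c t
      simp only [Function.comp_apply, Pi.add_apply]
      ring
    rw [h, Set.image_comp, hy α, hx α]
  smul_mem' β x hx α := by
    have h : (fun c => (fun i => α * (β • x) i) + c)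
        = (fun c => (fun i => (α * β) * x i) + c) := by
      funext c t
      simp only [Pi.add_apply, Pi.smul_apply, smul_eq_mul]
      ring
    rw [h]
    exact hx (α * β)

variable {C : Set (ι → F)}

lemma add_mem_of_mem_kerSet {x c : ι → F} (hx : x ∈ kerSet C) (hc : c ∈ C) : x + c ∈ C := by
  rw [← hx 1]
  exact ⟨c, hc, by simp⟩

def kerVanishingAt (C : Set (ι → F)) (i₀ : ι) : Submodule F (ι → F) :=
  kerSubmodule C ⊓ LinearMap.ker (LinearMap.proj i₀)

lemma kerDim_le_finrank_kerVanishingAt_add_one [Finite ι] (hC : 1 ∈ kerSet C) (i₀ : ι) :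
    kerDim C ≤ Module.finrank F (kerVanishingAt C i₀) + 1 := by
  have hK : kerSubmodule C ≤ kerVanishingAt C i₀ ⊔ Submodule.span F {1} := by
    intro x hx
    have hx₀ : x - x i₀ • 1 ∈ kerVanishingAt C i₀ :=
      ⟨(kerSubmodule C).sub_mem hx ((kerSubmodule C).smul_mem _ hC), by simp⟩
    simpa using Submodule.add_mem_sup hx₀
      (Submodule.smul_mem _ (x i₀) (Submodule.mem_span_singleton_self (1 : ι → F)))
  calc kerDim C = Module.finrank F (kerSubmodule C) := by
        rw [kerDim, show kerSet C = kerSubmodule C from rfl, Submodule.span_eq]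
    _ ≤ Module.finrank F ↥(kerVanishingAt C i₀ ⊔ Submodule.span F {1}) :=
        Submodule.finrank_mono hK
    _ ≤ Module.finrank F (kerVanishingAt C i₀) +
          Module.finrank F (Submodule.span F {(1 : ι → F)}) :=
        Submodule.finrank_add_le_finrank_add_finrank _ _
    _ ≤ Module.finrank F (kerVanishingAt C i₀) + 1 := by
        gcongr
        simpa using finrank_span_le_card ({1} : Set (ι → F))

end Kernel

section GeneralizedHadamard

variable {F ι : Type*} [Field F] {H : Matrix ι ι F}

lemma row_mem_ghCode (H : Matrix ι ι F) (i : ι) : H i ∈ ghCode H :=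
  ⟨0, i, by simp⟩

lemma one_mem_kerSet_ghCode (H : Matrix ι ι F) : (1 : ι → F) ∈ kerSet (ghCode H) := by
  intro α
  ext v
  constructor
  · rintro ⟨c, ⟨β, i, rfl⟩, rfl⟩
    exact ⟨β + α, i, by funext t; simp only [Pi.add_apply, Pi.one_apply]; ring⟩
  · rintro ⟨β, i, rfl⟩
    exact ⟨_, ⟨β - α, i, rfl⟩, by funext t; simp only [Pi.add_apply, Pi.one_apply]; ring⟩

lemma exists_eq_row_of_mem_ghCode {i₀ : ι} (hcol : ∀ i, H i i₀ = 0) {v : ι → F}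
    (hv : v ∈ ghCode H) (hv₀ : v i₀ = 0) : ∃ i, v = H i := by
  obtain ⟨α, i, rfl⟩ := hv
  obtain rfl : α = 0 := by simpa [hcol] using hv₀
  exact ⟨i, by simp⟩

lemma mem_ghCode_of_mem_kerVanishingAt {i₀ : ι} (hrow : ∀ t, H i₀ t = 0) {x : ι → F}
    (hx : x ∈ kerVanishingAt (ghCode H) i₀) : x ∈ ghCode H := by
  simpa [show H i₀ = 0 from funext hrow] using add_mem_of_mem_kerSet hx.1 (row_mem_ghCode H i₀)

variable [Fintype F] [DecidableEq F] [Fintype ι] {lam : ℕ}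

lemma IsGH.card_filter_eq (hGH : IsGH lam H) {i j : ι} (hij : i ≠ j) :
    #{t | H i t = H j t} = lam := by
  simpa [sub_eq_zero] using hGH i j hij 0

lemma IsGH.injective (hGH : IsGH lam H) (hlam : 0 < lam) : Function.Injective H := by
  intro i j hij
  by_contra hne
  have h := hGH i j hne 1
  simp only [hij, sub_self, zero_ne_one, filter_false, card_empty] at h
  omega

lemma IsGH.card_zeros_of_mem_ghCode (hGH : IsGH lam H) {i₀ : ι} (hrow : ∀ t, H i₀ t = 0)
    (hcol : ∀ i, H i i₀ = 0) {v : ι → F} (hv : v ∈ ghCode H) (hv₀ : v i₀ = 0) (hne : v ≠ 0) :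
    #{t | v t = 0} = lam := by
  obtain ⟨i, rfl⟩ := exists_eq_row_of_mem_ghCode hcol hv hv₀
  have hi : i ≠ i₀ := by
    rintro rfl
    exact hne (funext hrow)
  simpa [hrow] using hGH.card_filter_eq hi

theorem IsGH.card_kerVanishingAt_eq_or_dvd (hGH : IsGH lam H) (hlam : 0 < lam) {i₀ : ι}
    (hrow : ∀ t, H i₀ t = 0) (hcol : ∀ i, H i i₀ = 0) :
    Nat.card (kerVanishingAt (ghCode H) i₀) = Fintype.card ι ∨
      Nat.card (kerVanishingAt (ghCode H) i₀) ∣ Fintype.card ι - lam := by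
  classical
  set G := kerVanishingAt (ghCode H) i₀
  rw [Nat.card_eq_fintype_card]
  by_cases hK : ∀ j, H j ∈ kerSubmodule (ghCode H)
  · left
    refine (Fintype.card_of_bijective (f := fun i => (⟨H i, hK i, hcol i⟩ : G)) ⟨?_, ?_⟩).symm
    · exact fun i j hij => hGH.injective hlam (congrArg Subtype.val hij)
    · rintro ⟨x, hx⟩
      obtain ⟨i, rfl⟩ :=
        exists_eq_row_of_mem_ghCode hcol (mem_ghCode_of_mem_kerVanishingAt hrow hx) hx.2
      exact ⟨i, rfl⟩
  · right
    obtain ⟨j, hj⟩ := not_forall.1 hK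
    refine card_dvd_of_card_zeros G (H j) (fun x hx => hGH.card_zeros_of_mem_ghCode hrow hcol
      (mem_ghCode_of_mem_kerVanishingAt hrow hx) hx.2) fun x hx => ?_
    refine hGH.card_zeros_of_mem_ghCode hrow hcol
      (add_mem_of_mem_kerSet hx.1 (row_mem_ghCode H j)) (by simpa [hcol j] using hx.2) ?_
    intro hzero
    rw [← neg_eq_of_add_eq_zero_right hzero] at hj
    exact hj (Submodule.neg_mem _ (hx.1 : x ∈ kerSubmodule (ghCode H)))

end GeneralizedHadamard

lemma pow_mul_ne_pow {q s : ℕ} (hq : 2 ≤ q) (hs : ¬ q ∣ s) (hs1 : s ≠ 1) (h d : ℕ) :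
    q ^ h * s ≠ q ^ d := by
  intro heq
  rcases le_or_gt (h + 1) d with hd | hd
  · have hdvd : q ^ (h + 1) ∣ q ^ h * s := heq ▸ pow_dvd_pow q hd
    rw [pow_succ, Nat.mul_dvd_mul_iff_left (by positivity)] at hdvd
    exact hs hdvd
  · have hs0 : s ≠ 0 := by
      rintro rfl
      exact hs (dvd_zero q)
    have : q ^ d < q ^ h * s :=
      calc q ^ d ≤ q ^ h := Nat.pow_le_pow_right (by omega) (by omega)
        _ < q ^ h * s := lt_mul_of_one_lt_right (by positivity) (by omega)
    omega

lemma not_pow_dvd_mul_sub {q lam h s d : ℕ} (hq : 2 ≤ q) (hs : ¬ q ∣ s)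
    (hn : q * lam = q ^ h * s) (hd : h ≤ d) : ¬ q ^ d ∣ q * lam - lam := by
  intro hdvd
  have hdvd' : q ^ (h + 1) ∣ q ^ h * ((q - 1) * s) :=
    calc q ^ (h + 1) ∣ q ^ (d + 1) := pow_dvd_pow q (by omega)
      _ ∣ q * (q * lam - lam) := by rw [pow_succ']; exact mul_dvd_mul_left q hdvd
      _ = q ^ h * ((q - 1) * s) := by
        rw [← Nat.sub_one_mul, mul_left_comm, hn]; ring
  rw [pow_succ, Nat.mul_dvd_mul_iff_left (by positivity)] at hdvd'
  have hcop : Nat.Coprime q (q - 1) :=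
    (Nat.coprime_self_sub_right (by omega)).mpr (Nat.coprime_one_right q)
  exact hs (hcop.dvd_of_dvd_mul_left hdvd')

theorem stmt11_general {q lam h s : ℕ} {F : Type*} [Field F] [Fintype F] [DecidableEq F]
    (hcard : Fintype.card F = q)
    (hs1 : s ≠ 1) (hs : ¬ q ∣ s) (hn : q * lam = q ^ h * s)
    (H : Matrix (Fin (q * lam)) (Fin (q * lam)) F)
    (hGH : IsGH lam H) (hnorm : Normalized H) :
    kerDim (ghCode H) ≤ h := by
  classical
  have hq : 2 ≤ q := hcard ▸ Fintype.one_lt_card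
  have hlam : 0 < lam := by
    refine Nat.pos_of_ne_zero fun h0 => hs ?_
    rw [h0, mul_zero, eq_comm, mul_eq_zero] at hn
    rw [hn.resolve_left (pow_ne_zero _ (by omega))]
    exact dvd_zero q
  let i₀ : Fin (q * lam) := ⟨0, by positivity⟩
  have hrow : ∀ t, H i₀ t = 0 := fun t => hnorm i₀ t (Or.inl rfl)
  have hcol : ∀ i, H i i₀ = 0 := fun i => hnorm i i₀ (Or.inr rfl)
  set G := kerVanishingAt (ghCode H) i₀
  have hcardG : Nat.card G = q ^ Module.finrank F G :=
    Module.natCard_eq_pow_finrank.trans (by rw [Nat.card_eq_fintype_card (α := F), hcard])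
  suffices Module.finrank F G < h from
    (kerDim_le_finrank_kerVanishingAt_add_one (one_mem_kerSet_ghCode H) i₀).trans this
  by_contra! hd
  rcases hGH.card_kerVanishingAt_eq_or_dvd hlam hrow hcol with hG | hG <;>
    rw [hcardG, Fintype.card_fin] at hG
  · exact pow_mul_ne_pow hq hs hs1 _ _ (hG.trans hn).symm
  · exact not_pow_dvd_mul_sub hq hs hn hd hG

theorem stmt11 {q lam h s : ℕ} {F : Type*} [Field F] [Fintype F] [DecidableEq F]
    (hcard : Fintype.card F = q) (hlam : 0 < lam)
    (hs1 : s ≠ 1) (hs : ¬ q ∣ s) (hn : q * lam = q ^ h * s)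
    (H : Matrix (Fin (q * lam)) (Fin (q * lam)) F)
    (hGH : IsGH lam H) (hnorm : Normalized H) :
    kerDim (ghCode H) ≤ h :=
  stmt11_general hcard hs1 hs hn H hGH hnorm
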